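/- arXiv:2108.00245 — 3 statements merged into one kernel-verified Lean document; each statement's English description precedes it below -/
import Mathlib

section
/- Let (G,T) be a graft, let F be a minimum join of (G,T), and let X ⊆ V(G) be an F-combic set. Let C be a connected component of G − X with |V(C) ∩ T| odd, let e_C be the unique edge in δ_G(C) ∩ F, and let r_C ∈ V(C) be the end of e_C lying in C. Then F ∩ E(C) is a minimum join of the graft (C, (T ∩ V(C)) Δ {r_C}). -/
open scoped Classical

variable {V : Type*}

/-- The `F`-weight of a walk: number of edges outside `F` minus number of edges in `F`. -/
noncomputable def walkWeight {G : SimpleGraph V} (F : Set (Sym2 V)) {x y : V}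
    (p : G.Walk x y) : ℤ :=
  ((p.edges.filter fun e => e ∉ F).length : ℤ) -
    ((p.edges.filter fun e => e ∈ F).length : ℤ)

/-- The `F`-distance between `x` and `y`: the minimum `F`-weight of a path between them. -/
noncomputable def distF (G : SimpleGraph V) (F : Set (Sym2 V)) (x y : V) : ℤ :=
  sInf {w : ℤ | ∃ p : G.Walk x y, p.IsPath ∧ walkWeight F p = w}

/-- `F` is a join of the graft `(G, T)`. -/
def IsJoin (G : SimpleGraph V) (T : Set V) (F : Set (Sym2 V)) : Prop :=
  F ⊆ G.edgeSet ∧ ∀ v : V, v ∈ T ↔ Odd {e ∈ F | v ∈ e}.ncard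

/-- `F` is a minimum join of the graft `(G, T)`. -/
def IsMinJoin (G : SimpleGraph V) (T : Set V) (F : Set (Sym2 V)) : Prop :=
  IsJoin G T F ∧ ∀ F' : Set (Sym2 V), IsJoin G T F' → F.ncard ≤ F'.ncard

/-- `(G, T)` is a graft: every connected component contains an even number of vertices of `T`. -/
def IsGraft (G : SimpleGraph V) (T : Set V) : Prop :=
  ∀ v : V, Even {u | u ∈ T ∧ G.Reachable v u}.ncard

/-- `X` is an extreme set: `d_F(x, y) ≥ 0` for all `x, y ∈ X`. -/
def IsExtremeSet (G : SimpleGraph V) (F : Set (Sym2 V)) (X : Set V) : Prop :=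
  ∀ x ∈ X, ∀ y ∈ X, 0 ≤ distF G F x y

/-- `G` is bipartite with vertex set `Vset` and color classes `A`, `B`. -/
def IsBipartitionOn (G : SimpleGraph V) (Vset A B : Set V) : Prop :=
  A ∪ B = Vset ∧ Disjoint A B ∧
    ∀ v w : V, G.Adj v w → (v ∈ A ∧ w ∈ B) ∨ (v ∈ B ∧ w ∈ A)

/-- `X` is a maximal bipartitic extreme set with respect to color classes `A`, `B`. -/
def MaxBipExtreme (G : SimpleGraph V) (F : Set (Sym2 V)) (A B X : Set V) : Prop :=
  IsExtremeSet G F X ∧ (X ⊆ A ∨ X ⊆ B) ∧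
    ∀ X' : Set V, IsExtremeSet G F X' → (X' ⊆ A ∨ X' ⊆ B) → X ⊆ X' → X' = X

/-- `D_X`: the vertices of `Vset ∖ X` at negative `F`-distance from `X`. -/
def Dset (G : SimpleGraph V) (F : Set (Sym2 V)) (Vset X : Set V) : Set V :=
  {y | y ∈ Vset ∧ y ∉ X ∧ ∃ x ∈ X, distF G F x y < 0}

/-- `C_X = Vset ∖ X ∖ D_X`. -/
def Cset (G : SimpleGraph V) (F : Set (Sym2 V)) (Vset X : Set V) : Set V :=
  (Vset \ X) \ Dset G F Vset X

/-- `min_{x ∈ X} d_F(x, y)`. -/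
noncomputable def minDistX (G : SimpleGraph V) (F : Set (Sym2 V)) (X : Set V) (y : V) : ℤ :=
  sInf {d : ℤ | ∃ x ∈ X, distF G F x y = d}

/-- The graph `G − S` obtained by deleting the vertices of `S`. -/
def gDelete (G : SimpleGraph V) (S : Set V) : SimpleGraph V where
  Adj v w := G.Adj v w ∧ v ∉ S ∧ w ∉ S
  symm := ⟨fun v w ⟨h, hv, hw⟩ => ⟨h.symm, hw, hv⟩⟩
  loopless := ⟨fun v h => G.loopless.irrefl v h.1⟩

/-- The subgraph of `G` induced by `S`. -/
def gRestrict (G : SimpleGraph V) (S : Set V) : SimpleGraph V where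
  Adj v w := G.Adj v w ∧ v ∈ S ∧ w ∈ S
  symm := ⟨fun v w ⟨h, hv, hw⟩ => ⟨h.symm, hw, hv⟩⟩
  loopless := ⟨fun v h => G.loopless.irrefl v h.1⟩

/-- `C` is (the vertex set of) a connected component of `G − X`. -/
def IsCompOf (G : SimpleGraph V) (X C : Set V) : Prop :=
  ∃ v, v ∉ X ∧ C = {u | (gDelete G X).Reachable v u}

/-- `δ_G(C)`: the edges of `G` with exactly one end in `C`. -/
def edgeBoundary (G : SimpleGraph V) (C : Set V) : Set (Sym2 V) :=
  {e | e ∈ G.edgeSet ∧ ∃ u v : V, e = s(u, v) ∧ u ∈ C ∧ v ∉ C}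

/-- `X` is an `F`-combic set of the graft `(G, T)`. -/
def IsCombic (G : SimpleGraph V) (T : Set V) (F : Set (Sym2 V)) (X : Set V) : Prop :=
  (∀ u v : V, s(u, v) ∈ F → ¬(u ∈ X ∧ v ∈ X)) ∧
  (∀ C : Set V, IsCompOf G X C → Odd (C ∩ T).ncard →
      (edgeBoundary G C ∩ F).ncard = 1) ∧
  (∀ C : Set V, IsCompOf G X C → Even (C ∩ T).ncard →
      edgeBoundary G C ∩ F = ∅)

/-- The rootlization of `G` by the mount `X`, root `r` and attachment `s`. -/
def rootlize (G : SimpleGraph V) (X : Set V) (r s : V) : SimpleGraph V :=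
  SimpleGraph.fromRel fun v w => G.Adj v w ∨ (v = r ∧ w = s) ∨ (v = s ∧ w ∈ X)

/-- The initial component of `r`: the connected component of `r` in the subgraph
induced by the vertices at nonpositive `F`-distance from `r`. -/
def initComp (G : SimpleGraph V) (F : Set (Sym2 V)) (r : V) : Set V :=
  {x | (gRestrict G {y | distF G F r y ≤ 0}).Reachable r x}

/-!
Since `e_C` is the only edge of `F` leaving `C`, restricting `F` to `E(C)` changes the parity of
an `F`-degree in `C` only at `r_C`; so `F ∩ E(C)` is a join of `(C, (T ∩ V(C)) Δ {r_C})`.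
Conversely, any join `F'` of that graft, glued to `F ∖ E(C)`, is a join of `(G, T)` again, and
minimality of `F` then gives `|F ∩ E(C)| ≤ |F'|`.
-/

section CutAlongVertexSet

variable {G : SimpleGraph V} {C : Set V} {e : Sym2 V} {v w : V}

lemma mem_of_mem_edgeSet_gRestrict (he : e ∈ (gRestrict G C).edgeSet) (hv : v ∈ e) :
    v ∈ C := by
  induction e with
  | h a b =>
    rcases Sym2.mem_iff.mp hv with rfl | rfl
    exacts [he.2.1, he.2.2]

lemma edgeSet_gRestrict_subset (G : SimpleGraph V) (C : Set V) :
    (gRestrict G C).edgeSet ⊆ G.edgeSet := by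
  rintro ⟨a, b⟩ he
  exact he.1

lemma mem_edgeBoundary_of_notMem_edgeSet_gRestrict (he : e ∈ G.edgeSet) (hv : v ∈ C)
    (hve : v ∈ e) (hC : e ∉ (gRestrict G C).edgeSet) : e ∈ edgeBoundary G C := by
  obtain ⟨b, rfl⟩ := Sym2.mem_iff_exists.mp hve
  exact ⟨he, v, b, rfl, hv, fun hb => hC ⟨he, hv, hb⟩⟩

lemma notMem_edgeSet_gRestrict_of_mem_edgeBoundary (he : e ∈ edgeBoundary G C) :
    e ∉ (gRestrict G C).edgeSet := by
  obtain ⟨-, a, b, rfl, -, hb⟩ := he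
  exact fun h => hb h.2.2

lemma eq_of_mem_edgeBoundary (he : e ∈ edgeBoundary G C) (hv : v ∈ C) (hw : w ∈ C)
    (hve : v ∈ e) (hwe : w ∈ e) : v = w := by
  obtain ⟨-, a, b, rfl, -, hb⟩ := he
  rw [Sym2.mem_iff] at hve hwe
  rcases hve with rfl | rfl <;> rcases hwe with rfl | rfl <;> first | rfl | contradiction

lemma incident_diff_edgeSet_gRestrict {F : Set (Sym2 V)} (hFG : F ⊆ G.edgeSet) (hv : v ∈ C) :
    {e ∈ F \ (gRestrict G C).edgeSet | v ∈ e} = {e ∈ edgeBoundary G C ∩ F | v ∈ e} := by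
  ext e
  constructor
  · rintro ⟨⟨heF, hC⟩, hve⟩
    exact ⟨⟨mem_edgeBoundary_of_notMem_edgeSet_gRestrict (hFG heF) hv hve hC, heF⟩, hve⟩
  · rintro ⟨⟨he, heF⟩, hve⟩
    exact ⟨⟨heF, notMem_edgeSet_gRestrict_of_mem_edgeBoundary he⟩, hve⟩

lemma incident_diff_edgeSet_gRestrict_of_notMem (F : Set (Sym2 V)) (hv : v ∉ C) :
    {e ∈ F \ (gRestrict G C).edgeSet | v ∈ e} = {e ∈ F | v ∈ e} := by
  ext e
  exact ⟨fun h => ⟨h.1.1, h.2⟩,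
    fun h => ⟨⟨h.1, fun he => hv (mem_of_mem_edgeSet_gRestrict he h.2)⟩, h.2⟩⟩

variable {T : Set V} {F H : Set (Sym2 V)} {eC : Sym2 V} {rC : V}

lemma ncard_incident_diff_edgeSet_gRestrict (hFG : F ⊆ G.edgeSet)
    (heC : edgeBoundary G C ∩ F = {eC}) (hrC : rC ∈ C) (hrCe : rC ∈ eC) (hv : v ∈ C) :
    {e ∈ F \ (gRestrict G C).edgeSet | v ∈ e}.ncard = if v = rC then 1 else 0 := by
  have heCδ : eC ∈ edgeBoundary G C := (heC.superset rfl).1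
  rw [incident_diff_edgeSet_gRestrict hFG hv, heC]
  split_ifs with hvr
  · subst hvr
    refine Set.ncard_eq_one.2 ⟨eC, Set.ext fun e => ⟨fun h => h.1, fun h => ⟨h, ?_⟩⟩⟩
    exact h ▸ hrCe
  · rw [Set.ncard_eq_zero]
    ext e
    simp only [Set.mem_singleton_iff, Set.mem_ofPred_eq, Set.mem_empty_iff_false, iff_false,
      not_and]
    rintro rfl hve
    exact hvr (eq_of_mem_edgeBoundary heCδ hv hrC hve hrCe)

lemma mem_symmDiff_inter_singleton_iff (hv : v ∈ C) :
    v ∈ symmDiff (T ∩ C) {rC} ↔ ¬(v ∈ T ↔ v = rC) := by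
  by_cases hvr : v = rC
  · subst hvr
    simp [Set.mem_symmDiff, hv]
  · simp [Set.mem_symmDiff, hv, hvr]

lemma notMem_symmDiff_inter_singleton (hrC : rC ∈ C) (hv : v ∉ C) :
    v ∉ symmDiff (T ∩ C) {rC} := by
  rintro (⟨⟨-, hvC⟩, -⟩ | ⟨rfl, -⟩)
  exacts [hv hvC, hv hrC]

theorem isJoin_gRestrict_iff_isJoin_union_diff [Finite V] (hF : IsJoin G T F)
    (heC : edgeBoundary G C ∩ F = {eC}) (hrC : rC ∈ C) (hrCe : rC ∈ eC)
    (hH : H ⊆ (gRestrict G C).edgeSet) :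
    IsJoin (gRestrict G C) (symmDiff (T ∩ C) {rC}) H ↔
      IsJoin G T (H ∪ (F \ (gRestrict G C).edgeSet)) := by
  have hsub : H ∪ (F \ (gRestrict G C).edgeSet) ⊆ G.edgeSet :=
    Set.union_subset (hH.trans (edgeSet_gRestrict_subset G C)) (Set.sdiff_subset.trans hF.1)
  refine and_congr (iff_of_true hH hsub) (forall_congr' fun v => ?_)
  have hdisj : Disjoint {e ∈ H | v ∈ e} {e ∈ F \ (gRestrict G C).edgeSet | v ∈ e} :=
    Set.disjoint_of_subset (Set.sep_subset _ _) (Set.sep_subset _ _)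
      (Set.disjoint_of_subset_left hH Set.disjoint_sdiff_right)
  have hunion : {e ∈ H ∪ (F \ (gRestrict G C).edgeSet) | v ∈ e} =
      {e ∈ H | v ∈ e} ∪ {e ∈ F \ (gRestrict G C).edgeSet | v ∈ e} := Set.sep_union
  rw [hunion, Set.ncard_union_eq hdisj]
  by_cases hv : v ∈ C
  · rw [mem_symmDiff_inter_singleton_iff hv,
      ncard_incident_diff_edgeSet_gRestrict hF.1 heC hrC hrCe hv]
    by_cases hvr : v = rC
    · simp only [hvr, if_true, Nat.odd_add_one]
      tauto
    · simp [hvr]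
  · have hHv : {e ∈ H | v ∈ e} = ∅ :=
      Set.eq_empty_of_forall_notMem fun e he => hv (mem_of_mem_edgeSet_gRestrict (hH he.1) he.2)
    rw [incident_diff_edgeSet_gRestrict_of_notMem F hv, hHv, Set.ncard_empty, zero_add]
    exact iff_of_true (by simp [notMem_symmDiff_inter_singleton hrC hv]) (hF.2 v)

end CutAlongVertexSet

theorem stmt_0_general [Fintype V] (G : SimpleGraph V) (T : Set V) (F : Set (Sym2 V))
    (hF : IsMinJoin G T F)
    (C : Set V)
    (eC : Sym2 V) (heC : edgeBoundary G C ∩ F = {eC})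
    (rC : V) (hrC : rC ∈ C) (hrCe : rC ∈ eC) :
    IsMinJoin (gRestrict G C) (symmDiff (T ∩ C) {rC})
      (F ∩ (gRestrict G C).edgeSet) := by
  have hcut := fun {H : Set (Sym2 V)} (hH : H ⊆ (gRestrict G C).edgeSet) =>
    isJoin_gRestrict_iff_isJoin_union_diff hF.1 heC hrC hrCe hH
  refine ⟨(hcut Set.inter_subset_right).2 (by rw [Set.inter_union_sdiff]; exact hF.1),
    fun F' hF' => ?_⟩
  have hglued := hF.2 _ ((hcut hF'.1).1 hF')
  rw [Set.ncard_union_eq (Set.disjoint_of_subset_left hF'.1 Set.disjoint_sdiff_right)] at hglued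
  have hsplit := Set.ncard_inter_add_ncard_sdiff_eq_ncard F (gRestrict G C).edgeSet
  omega

/-- If `X` is `F`-combic and `C` is an odd component of `G − X` with
`e_C` the unique edge of `δ_G(C) ∩ F` and `r_C ∈ C` its end in `C`, then `F ∩ E(C)` is a
minimum join of the graft `(C, (T ∩ V(C)) Δ {r_C})`. -/
theorem stmt_0 [Fintype V] (G : SimpleGraph V) (T : Set V) (F : Set (Sym2 V)) (X : Set V)
    (hGT : IsGraft G T) (hF : IsMinJoin G T F) (hX : IsCombic G T F X)
    (C : Set V) (hC : IsCompOf G X C) (hCodd : Odd (C ∩ T).ncard)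
    (eC : Sym2 V) (heC : edgeBoundary G C ∩ F = {eC})
    (rC : V) (hrC : rC ∈ C) (hrCe : rC ∈ eC) :
    IsMinJoin (gRestrict G C) (symmDiff (T ∩ C) {rC})
      (F ∩ (gRestrict G C).edgeSet) :=
  stmt_0_general G T F hF C eC heC rC hrC hrCe
end

section
/- Let (G,T) be a graft, let F be a minimum join of (G,T), and let X ⊆ V(G) be an F-combic set. Then for every connected component C of G − X with |V(C) ∩ T| even, the set F ∩ E(C) is a minimum join of the graft (C, T ∩ V(C)). -/
open scoped Classical

variable {V : Type*}

/-!
As `X` is `F`-combic, no edge of `F` leaves the even component `C`, so the join condition for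
`F` splits into a condition at the vertices of `C`, which only sees `F ∩ E(C)`, and one outside
`C`, which only sees `F \ E(C)`. Hence `F ∩ E(C)` is a join of `(C, T ∩ C)`, and replacing it
by any other join `F'` of `(C, T ∩ C)` yields the join `(F \ E(C)) ∪ F'` of `(G, T)`.
Minimality of `F` then gives `|F ∩ E(C)| ≤ |F'|`.
-/

section

variable {G : SimpleGraph V} {C T : Set V} {F F' : Set (Sym2 V)}

lemma gRestrict_le : gRestrict G C ≤ G := fun _ _ h => h.1

lemma mem_of_mem_gRestrict_edgeSet {e : Sym2 V} (he : e ∈ (gRestrict G C).edgeSet) {v : V}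
    (hv : v ∈ e) : v ∈ C := by
  induction e using Sym2.ind with
  | h a b =>
    obtain ⟨-, ha, hb⟩ := he
    rcases Sym2.mem_iff.mp hv with rfl | rfl <;> assumption

lemma mem_gRestrict_edgeSet_of_edgeBoundary_inter_eq_empty (hFG : F ⊆ G.edgeSet)
    (hδ : edgeBoundary G C ∩ F = ∅) {e : Sym2 V} (he : e ∈ F) {v : V} (hv : v ∈ e)
    (hvC : v ∈ C) : e ∈ (gRestrict G C).edgeSet := by
  induction e using Sym2.ind with
  | h a b =>
    have closed : ∀ x y, s(a, b) = s(x, y) → x ∈ C → y ∈ C := fun x y hxy hx => by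
      by_contra hy
      exact Set.eq_empty_iff_forall_notMem.mp hδ _ ⟨⟨hFG he, x, y, hxy, hx, hy⟩, he⟩
    rcases Sym2.mem_iff.mp hv with rfl | rfl
    · exact ⟨hFG he, hvC, closed _ _ rfl hvC⟩
    · exact ⟨hFG he, closed _ _ Sym2.eq_swap hvC, hvC⟩

lemma incidence_eq_empty_of_subset_gRestrict_edgeSet {S : Set (Sym2 V)}
    (hS : S ⊆ (gRestrict G C).edgeSet) {v : V} (hv : v ∉ C) : {e ∈ S | v ∈ e} = ∅ :=
  Set.sep_eq_empty_iff_mem_false.mpr fun _ he hve => hv (mem_of_mem_gRestrict_edgeSet (hS he) hve)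

lemma incidence_diff_gRestrict_edgeSet_eq_empty (hFG : F ⊆ G.edgeSet)
    (hδ : edgeBoundary G C ∩ F = ∅) {v : V} (hv : v ∈ C) :
    {e ∈ F \ (gRestrict G C).edgeSet | v ∈ e} = ∅ :=
  Set.sep_eq_empty_iff_mem_false.mpr fun _ he hve =>
    he.2 (mem_gRestrict_edgeSet_of_edgeBoundary_inter_eq_empty hFG hδ he.1 hve hv)

lemma incidence_inter_gRestrict_edgeSet (hFG : F ⊆ G.edgeSet) (hδ : edgeBoundary G C ∩ F = ∅)
    {v : V} (hv : v ∈ C) : {e ∈ F ∩ (gRestrict G C).edgeSet | v ∈ e} = {e ∈ F | v ∈ e} := by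
  ext e
  exact ⟨fun ⟨he, hve⟩ => ⟨he.1, hve⟩, fun ⟨he, hve⟩ =>
    ⟨⟨he, mem_gRestrict_edgeSet_of_edgeBoundary_inter_eq_empty hFG hδ he hve hv⟩, hve⟩⟩

lemma incidence_diff_gRestrict_edgeSet {v : V} (hv : v ∉ C) :
    {e ∈ F \ (gRestrict G C).edgeSet | v ∈ e} = {e ∈ F | v ∈ e} := by
  ext e
  exact ⟨fun ⟨he, hve⟩ => ⟨he.1, hve⟩, fun ⟨he, hve⟩ =>
    ⟨⟨he, fun heC => hv (mem_of_mem_gRestrict_edgeSet heC hve)⟩, hve⟩⟩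

lemma IsJoin.inter_gRestrict_edgeSet (hF : IsJoin G T F) (hδ : edgeBoundary G C ∩ F = ∅) :
    IsJoin (gRestrict G C) (T ∩ C) (F ∩ (gRestrict G C).edgeSet) := by
  refine ⟨Set.inter_subset_right, fun v => ?_⟩
  by_cases hv : v ∈ C
  · rw [incidence_inter_gRestrict_edgeSet hF.1 hδ hv]
    simpa [hv] using hF.2 v
  · rw [incidence_eq_empty_of_subset_gRestrict_edgeSet Set.inter_subset_right hv]
    simp [hv]

lemma IsJoin.diff_gRestrict_edgeSet_union (hF : IsJoin G T F) (hδ : edgeBoundary G C ∩ F = ∅)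
    (hF' : IsJoin (gRestrict G C) (T ∩ C) F') :
    IsJoin G T ((F \ (gRestrict G C).edgeSet) ∪ F') := by
  refine ⟨Set.union_subset (Set.sdiff_subset.trans hF.1)
    (hF'.1.trans (SimpleGraph.edgeSet_mono gRestrict_le)), fun v => ?_⟩
  have hinc : {e ∈ (F \ (gRestrict G C).edgeSet) ∪ F' | v ∈ e} =
      {e ∈ F \ (gRestrict G C).edgeSet | v ∈ e} ∪ {e ∈ F' | v ∈ e} := Set.sep_union
  rw [hinc]
  by_cases hv : v ∈ C
  · rw [incidence_diff_gRestrict_edgeSet_eq_empty hF.1 hδ hv, Set.empty_union]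
    simpa [hv] using hF'.2 v
  · rw [incidence_diff_gRestrict_edgeSet hv,
      incidence_eq_empty_of_subset_gRestrict_edgeSet hF'.1 hv, Set.union_empty]
    exact hF.2 v

lemma IsMinJoin.inter_gRestrict_edgeSet [Finite V] (hF : IsMinJoin G T F)
    (hδ : edgeBoundary G C ∩ F = ∅) :
    IsMinJoin (gRestrict G C) (T ∩ C) (F ∩ (gRestrict G C).edgeSet) := by
  refine ⟨hF.1.inter_gRestrict_edgeSet hδ, fun F' hF' => ?_⟩
  have hmin := hF.2 _ (hF.1.diff_gRestrict_edgeSet_union hδ hF')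
  have hsplit := Set.ncard_inter_add_ncard_sdiff_eq_ncard F (gRestrict G C).edgeSet
  have hunion := Set.ncard_union_le (F \ (gRestrict G C).edgeSet) F'
  omega

end

theorem stmt_1_general [Fintype V] (G : SimpleGraph V) (T : Set V) (F : Set (Sym2 V)) (X : Set V)
    (hF : IsMinJoin G T F) (hX : IsCombic G T F X) :
    ∀ C : Set V, IsCompOf G X C → Even (C ∩ T).ncard →
      IsMinJoin (gRestrict G C) (T ∩ C) (F ∩ (gRestrict G C).edgeSet) :=
  fun C hC hEven => hF.inter_gRestrict_edgeSet (hX.2.2 C hC hEven)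

/-- If `X` is `F`-combic and `C` is an even component of `G − X`, then
`F ∩ E(C)` is a minimum join of the graft `(C, T ∩ V(C))`. -/
theorem stmt_1 [Fintype V] (G : SimpleGraph V) (T : Set V) (F : Set (Sym2 V)) (X : Set V)
    (hGT : IsGraft G T) (hF : IsMinJoin G T F) (hX : IsCombic G T F X) :
    ∀ C : Set V, IsCompOf G X C → Even (C ∩ T).ncard →
      IsMinJoin (gRestrict G C) (T ∩ C) (F ∩ (gRestrict G C).edgeSet) :=
  stmt_1_general G T F X hF hX
end

section
/- Let (G,T) be a graft that is primal with respect to r ∈ V(G), and let F be a minimum join of (G,T). Let r' ∈ A(r) with r' ≠ r, and let P be an F-shortest path between r and r'. Then F Δ E(P) is a minimum join of the graft (G, T Δ {r, r'}); moreover, for every x ∈ V(G), the F-distance of x from r in (G,T) equals the (F Δ E(P))-distance of x from r' in (G, T Δ {r, r'}). Consequently, (G, T Δ {r, r'}) is primal with respect to r', and its sets A(r') and D(r') (computed in (G, T Δ {r,r'}) with respect to F Δ E(P)) equal A(r) and D(r) of (G,T), respectively. -/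
open scoped Classical

variable {V : Type*}

/-!
Weigh an edge set `S` by `w_F(S) = |S ∖ F| - |S ∩ F|`, so that `|F ∆ S| = |F| + w_F(S)`.
If `F` is a minimum join and the odd-degree vertices of `S ⊆ E(G)` are exactly `a` and `b`,
then `S` contains a path `p` from `a` to `b`, and `S ∖ E(p)` has only even degrees; so
`F ∆ (S ∖ E(p))` is again a join of `T`, `S ∖ E(p)` has nonnegative weight, and
`d_F(a, b) ≤ w_F(p) ≤ w_F(S)`.

With `S = F ∆ F'` for a join `F'` of `T ∆ {a, b}`, this shows that `F ∆ E(P)` is a minimum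
join whenever `P` is an `F`-shortest path. With `S = E(P) ∆ E(R)` for paths `P : a → b` and
`R : a → x`, writing `F = (F ∆ E(P)) ∆ E(P)` turns it into
`d_F(b, x) ≤ w_{F ∆ E(P)}(R) - w_{F ∆ E(P)}(P)`. Applied once to `F ∆ E(P)` and once to `F`
(with `P` reversed), this gives `d_{F ∆ E(P)}(b, x) = d_F(a, x) - d_F(a, b)`.
-/

open scoped symmDiff

theorem Set.odd_ncard_symmDiff_iff {α : Type*} [Finite α] (A B : Set α) :
    Odd (A ∆ B).ncard ↔ (Odd A.ncard ↔ ¬Odd B.ncard) := by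
  have hAB := Set.ncard_inter_add_ncard_sdiff_eq_ncard A B
  have hBA := Set.ncard_inter_add_ncard_sdiff_eq_ncard B A
  rw [Set.inter_comm] at hBA
  rw [Set.symmDiff_def, Set.ncard_union_eq disjoint_sdiff_sdiff]
  simp only [Nat.odd_iff]
  omega

theorem Set.singleton_symmDiff_singleton {α : Type*} {a b : α} (hab : a ≠ b) :
    ({a} : Set α) ∆ {b} = {a, b} := by
  ext x
  simp only [Set.mem_symmDiff, Set.mem_singleton_iff, Set.mem_insert_iff]
  grind

def oddVerts (S : Set (Sym2 V)) : Set V := {v | Odd {e ∈ S | v ∈ e}.ncard}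

noncomputable def edgeSetWeight (F S : Set (Sym2 V)) : ℤ :=
  ((S \ F).ncard : ℤ) - ((S ∩ F).ncard : ℤ)

theorem mem_oddVerts {S : Set (Sym2 V)} {v : V} :
    v ∈ oddVerts S ↔ Odd {e ∈ S | v ∈ e}.ncard :=
  Iff.rfl

theorem oddVerts_singleton_edge {a b : V} (hab : a ≠ b) :
    oddVerts {s(a, b)} = {a} ∆ {b} := by
  ext v
  rw [mem_oddVerts, Set.mem_symmDiff, Set.mem_singleton_iff, Set.mem_singleton_iff]
  by_cases hv : v ∈ s(a, b)
  · have : {e ∈ ({s(a, b)} : Set (Sym2 V)) | v ∈ e} = {s(a, b)} := by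
      ext e; simp +contextual [hv]
    rw [this, Set.ncard_singleton]
    rcases Sym2.mem_iff.1 hv with rfl | rfl <;> simp [hab, hab.symm]
  · have : {e ∈ ({s(a, b)} : Set (Sym2 V)) | v ∈ e} = ∅ := by
      ext e; simp +contextual [hv]
    rw [this, Set.ncard_empty]
    rw [Sym2.mem_iff] at hv
    simp only [Nat.not_odd_zero, false_iff]
    tauto

theorem isJoin_iff {G : SimpleGraph V} {T : Set V} {F : Set (Sym2 V)} :
    IsJoin G T F ↔ F ⊆ G.edgeSet ∧ oddVerts F = T :=
  and_congr_right' ⟨fun h => Set.ext fun v => (h v).symm, fun h _ => h ▸ Iff.rfl⟩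

theorem edgeSetWeight_empty (F : Set (Sym2 V)) : edgeSetWeight F ∅ = 0 := by
  simp [edgeSetWeight]

theorem walkWeight_eq_edgeSetWeight {G : SimpleGraph V} (F : Set (Sym2 V)) {x y : V}
    {p : G.Walk x y} (hp : p.IsTrail) : walkWeight F p = edgeSetWeight F p.edgeSet := by
  have hlen (q : Sym2 V → Bool) :
      (p.edges.filter q).length = {e | e ∈ p.edges ∧ q e}.ncard := by
    rw [← List.toFinset_card_of_nodup (hp.edges_nodup.filter _), ← Set.ncard_coe_finset]
    congr 1
    ext e
    simp
  rw [walkWeight, edgeSetWeight, hlen, hlen]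
  simp only [decide_eq_true_eq]
  rfl

theorem distF_of_not_reachable {G : SimpleGraph V} (F : Set (Sym2 V)) {x y : V}
    (h : ¬G.Reachable x y) : distF G F x y = 0 := by
  have : {w : ℤ | ∃ p : G.Walk x y, p.IsPath ∧ walkWeight F p = w} = ∅ :=
    Set.eq_empty_of_forall_notMem fun _ ⟨p, _⟩ => h ⟨p⟩
  rw [distF, this, Int.csInf_empty]

section Finite
variable [Finite V]

theorem oddVerts_symmDiff (A B : Set (Sym2 V)) :
    oddVerts (A ∆ B) = oddVerts A ∆ oddVerts B := by
  ext v
  have hsep : {e ∈ A ∆ B | v ∈ e} = {e ∈ A | v ∈ e} ∆ {e ∈ B | v ∈ e} := by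
    ext e
    simp only [Set.mem_ofPred_eq, Set.mem_symmDiff]
    tauto
  rw [mem_oddVerts, hsep, Set.odd_ncard_symmDiff_iff, Set.mem_symmDiff, mem_oddVerts,
    mem_oddVerts]
  tauto

theorem SimpleGraph.Walk.IsTrail.oddVerts_edgeSet {G : SimpleGraph V} {a b : V}
    {p : G.Walk a b} (hp : p.IsTrail) : oddVerts p.edgeSet = {a} ∆ {b} := by
  induction p with
  | nil => simp [oddVerts]
  | @cons u v w h p ih =>
    rw [SimpleGraph.Walk.isTrail_cons] at hp
    have hunion : {s(u, v)} ∪ p.edgeSet = {s(u, v)} ∆ p.edgeSet :=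
      (Set.disjoint_singleton_left.2 hp.2 : Disjoint {s(u, v)} p.edgeSet).symmDiff_eq_sup.symm
    rw [SimpleGraph.Walk.edgeSet_cons, Set.insert_eq, hunion,
      oddVerts_symmDiff, oddVerts_singleton_edge h.ne, ih hp.1, symmDiff_assoc,
      symmDiff_symmDiff_cancel_left]

theorem SimpleGraph.exists_isPath_edgeSet_subset {G : SimpleGraph V} {S : Set (Sym2 V)}
    (hS : S ⊆ G.edgeSet) {a b : V} (h : oddVerts S = {a} ∆ {b}) :
    ∃ p : G.Walk a b, p.IsPath ∧ p.edgeSet ⊆ S := by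
  suffices ∃ p : G.Walk a b, p.edgeSet ⊆ S by
    obtain ⟨p, hp⟩ := this
    exact ⟨p.bypass, p.bypass_isPath, fun e he => hp (p.edges_bypass_subset_edges he)⟩
  induction hn : S.ncard using Nat.strong_induction_on generalizing S a with
  | _ n ih =>
  by_cases hab : a = b
  · subst hab
    exact ⟨.nil, by simp⟩
  have ha : a ∈ oddVerts S := by simp [h, Set.mem_symmDiff, hab]
  obtain ⟨e, he, hae⟩ := Set.nonempty_of_ncard_ne_zero ha.pos.ne'
  obtain ⟨c, rfl⟩ := Sym2.mem_iff_exists.1 hae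
  have hadj : G.Adj a c := hS he
  have hrest : oddVerts (S \ {s(a, c)}) = {c} ∆ {b} := by
    rw [← symmDiff_of_ge (Set.singleton_subset_iff.2 he), oddVerts_symmDiff, h,
      oddVerts_singleton_edge hadj.ne, symmDiff_symmDiff_symmDiff_comm, symmDiff_self,
      bot_symmDiff, symmDiff_comm]
  obtain ⟨q, hq⟩ := ih _ (hn ▸ Set.ncard_sdiff_singleton_lt_of_mem he)
    (Set.sdiff_subset.trans hS) hrest rfl
  exact ⟨.cons hadj q, by
    rw [SimpleGraph.Walk.edgeSet_cons]
    exact Set.insert_subset he (hq.trans Set.sdiff_subset)⟩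

theorem ncard_symmDiff_eq_add_edgeSetWeight (F S : Set (Sym2 V)) :
    ((F ∆ S).ncard : ℤ) = F.ncard + edgeSetWeight F S := by
  have hF := Set.ncard_inter_add_ncard_sdiff_eq_ncard F S
  rw [Set.inter_comm] at hF
  rw [edgeSetWeight, Set.symmDiff_def, Set.ncard_union_eq disjoint_sdiff_sdiff]
  omega

theorem edgeSetWeight_symmDiff_symmDiff (F A B : Set (Sym2 V)) :
    edgeSetWeight (F ∆ A) (A ∆ B) = edgeSetWeight F B - edgeSetWeight F A := by
  have hB := ncard_symmDiff_eq_add_edgeSetWeight F B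
  have hA := ncard_symmDiff_eq_add_edgeSetWeight F A
  have hAB := ncard_symmDiff_eq_add_edgeSetWeight (F ∆ A) (A ∆ B)
  rw [symmDiff_assoc, symmDiff_symmDiff_cancel_left] at hAB
  linarith

theorem edgeSetWeight_symmDiff_self (F A : Set (Sym2 V)) :
    edgeSetWeight (F ∆ A) A = -edgeSetWeight F A := by
  have h := edgeSetWeight_symmDiff_symmDiff F A ∅
  rwa [← Set.bot_eq_empty, symmDiff_bot, Set.bot_eq_empty, edgeSetWeight_empty, zero_sub] at h

theorem edgeSetWeight_union_of_disjoint (F : Set (Sym2 V)) {A B : Set (Sym2 V)}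
    (h : Disjoint A B) : edgeSetWeight F (A ∪ B) = edgeSetWeight F A + edgeSetWeight F B := by
  simp only [edgeSetWeight, Set.union_sdiff_distrib, Set.union_inter_distrib_right,
    Set.ncard_union_eq (h.mono Set.sdiff_subset Set.sdiff_subset),
    Set.ncard_union_eq (h.mono Set.inter_subset_left Set.inter_subset_left)]
  push_cast
  ring

theorem IsJoin.symmDiff {G : SimpleGraph V} {T : Set V} {F S : Set (Sym2 V)}
    (hF : IsJoin G T F) (hS : S ⊆ G.edgeSet) : IsJoin G (T ∆ oddVerts S) (F ∆ S) := by
  rw [isJoin_iff] at hF ⊢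
  exact ⟨symmDiff_le_sup.trans (Set.union_subset hF.1 hS), by rw [oddVerts_symmDiff, hF.2]⟩

theorem bddBelow_walkWeight_isPath (G : SimpleGraph V) (F : Set (Sym2 V)) (x y : V) :
    BddBelow {w : ℤ | ∃ p : G.Walk x y, p.IsPath ∧ walkWeight F p = w} := by
  have := Fintype.ofFinite V
  refine ⟨-(Fintype.card V : ℤ), ?_⟩
  rintro _ ⟨p, hp, rfl⟩
  have hlen : (p.length : ℤ) < Fintype.card V := by exact_mod_cast hp.length_lt
  have hge : -(p.length : ℤ) ≤ walkWeight F p := by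
    rw [walkWeight, ← p.length_edges]
    have := p.edges.length_eq_length_filter_add fun e => decide (e ∉ F)
    simp only [decide_not, Bool.not_not] at this
    omega
  omega

theorem distF_le_walkWeight {G : SimpleGraph V} (F : Set (Sym2 V)) {x y : V}
    {p : G.Walk x y} (hp : p.IsPath) : distF G F x y ≤ walkWeight F p :=
  csInf_le (bddBelow_walkWeight_isPath G F x y) ⟨p, hp, rfl⟩

theorem exists_isPath_walkWeight_eq_distF {G : SimpleGraph V} (F : Set (Sym2 V)) {x y : V}
    (h : G.Reachable x y) : ∃ p : G.Walk x y, p.IsPath ∧ walkWeight F p = distF G F x y := by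
  obtain ⟨q⟩ := h
  have hne : {w : ℤ | ∃ p : G.Walk x y, p.IsPath ∧ walkWeight F p = w}.Nonempty :=
    ⟨_, q.bypass, q.bypass_isPath, rfl⟩
  exact Int.csInf_mem hne (bddBelow_walkWeight_isPath G F x y)

variable {G : SimpleGraph V} {T : Set V} {F : Set (Sym2 V)}

theorem IsMinJoin.edgeSetWeight_nonneg (hF : IsMinJoin G T F) {S : Set (Sym2 V)}
    (hS : S ⊆ G.edgeSet) (hodd : oddVerts S = ∅) : 0 ≤ edgeSetWeight F S := by
  have hjoin := hF.1.symmDiff hS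
  rw [hodd, ← Set.bot_eq_empty, symmDiff_bot] at hjoin
  have := ncard_symmDiff_eq_add_edgeSetWeight F S
  have : F.ncard ≤ (F ∆ S).ncard := hF.2 _ hjoin
  omega

theorem IsMinJoin.distF_le_edgeSetWeight (hF : IsMinJoin G T F) {S : Set (Sym2 V)}
    (hS : S ⊆ G.edgeSet) {a b : V} (hodd : oddVerts S = {a} ∆ {b}) :
    distF G F a b ≤ edgeSetWeight F S := by
  obtain ⟨p, hp, hpS⟩ := SimpleGraph.exists_isPath_edgeSet_subset hS hodd
  have hrest : oddVerts (S \ p.edgeSet) = ∅ := by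
    rw [← symmDiff_of_ge hpS, oddVerts_symmDiff, hodd, hp.isTrail.oddVerts_edgeSet,
      symmDiff_self, Set.bot_eq_empty]
  calc distF G F a b ≤ walkWeight F p := distF_le_walkWeight F hp
    _ = edgeSetWeight F p.edgeSet := walkWeight_eq_edgeSetWeight F hp.isTrail
    _ ≤ edgeSetWeight F (S \ p.edgeSet) + edgeSetWeight F p.edgeSet :=
      le_add_of_nonneg_left (hF.edgeSetWeight_nonneg (Set.sdiff_subset.trans hS) hrest)
    _ = edgeSetWeight F S := by
      rw [← edgeSetWeight_union_of_disjoint F disjoint_sdiff_self_left,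
        Set.sdiff_union_of_subset hpS]

theorem IsMinJoin.symmDiff_edgeSet (hF : IsMinJoin G T F) {a b : V} {P : G.Walk a b}
    (hP : P.IsTrail) (hPsh : walkWeight F P = distF G F a b) :
    IsMinJoin G (T ∆ ({a} ∆ {b})) (F ∆ P.edgeSet) := by
  have hjoin := hF.1.symmDiff (S := P.edgeSet) P.edges_subset_edgeSet
  rw [hP.oddVerts_edgeSet] at hjoin
  refine ⟨hjoin, fun F' hF' => ?_⟩
  obtain ⟨hFsub, hFodd⟩ := isJoin_iff.1 hF.1
  obtain ⟨hF'sub, hF'odd⟩ := isJoin_iff.1 hF'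
  have hFF' : F ∆ F' ⊆ G.edgeSet := symmDiff_le_sup.trans (Set.union_subset hFsub hF'sub)
  have hodd : oddVerts (F ∆ F') = {a} ∆ {b} := by
    rw [oddVerts_symmDiff, hFodd, hF'odd, symmDiff_symmDiff_cancel_left]
  have hle := hF.distF_le_edgeSetWeight hFF' hodd
  have hF'card := ncard_symmDiff_eq_add_edgeSetWeight F (F ∆ F')
  rw [symmDiff_symmDiff_cancel_left] at hF'card
  have hPcard := ncard_symmDiff_eq_add_edgeSetWeight F P.edgeSet
  rw [← walkWeight_eq_edgeSetWeight F hP, hPsh] at hPcard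
  omega

theorem IsMinJoin.distF_le_edgeSetWeight_sub (hF : IsMinJoin G T F) {a b x : V}
    {P : G.Walk a b} (hP : P.IsTrail) {R : G.Walk a x} (hR : R.IsTrail) :
    distF G F b x ≤ edgeSetWeight (F ∆ P.edgeSet) R.edgeSet -
      edgeSetWeight (F ∆ P.edgeSet) P.edgeSet := by
  have hS : P.edgeSet ∆ R.edgeSet ⊆ G.edgeSet :=
    symmDiff_le_sup.trans (Set.union_subset P.edges_subset_edgeSet R.edges_subset_edgeSet)
  have hodd : oddVerts (P.edgeSet ∆ R.edgeSet) = {b} ∆ {x} := by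
    rw [oddVerts_symmDiff, hP.oddVerts_edgeSet, hR.oddVerts_edgeSet,
      symmDiff_symmDiff_symmDiff_comm, symmDiff_self, bot_symmDiff]
  calc distF G F b x ≤ edgeSetWeight F (P.edgeSet ∆ R.edgeSet) :=
        hF.distF_le_edgeSetWeight hS hodd
    _ = edgeSetWeight (F ∆ P.edgeSet ∆ P.edgeSet) (P.edgeSet ∆ R.edgeSet) := by
        rw [symmDiff_symmDiff_cancel_right]
    _ = _ := edgeSetWeight_symmDiff_symmDiff _ _ _

theorem IsMinJoin.distF_symmDiff_edgeSet (hF : IsMinJoin G T F) {a b x : V}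
    {P : G.Walk a b} (hP : P.IsTrail) (hPsh : walkWeight F P = distF G F a b)
    (hx : G.Reachable a x) :
    distF G (F ∆ P.edgeSet) b x = distF G F a x - distF G F a b := by
  obtain ⟨R, hR, hRsh⟩ := exists_isPath_walkWeight_eq_distF F hx
  obtain ⟨Q, hQ, hQsh⟩ := exists_isPath_walkWeight_eq_distF (F ∆ P.edgeSet)
    (P.reverse.reachable.trans hx)
  have hle := (hF.symmDiff_edgeSet hP hPsh).distF_le_edgeSetWeight_sub hP hR.isTrail
  have hge := hF.distF_le_edgeSetWeight_sub (hP.reverse) hQ.isTrail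
  rw [symmDiff_symmDiff_cancel_right] at hle
  rw [SimpleGraph.Walk.edgeSet_reverse, edgeSetWeight_symmDiff_self] at hge
  rw [walkWeight_eq_edgeSetWeight _ hR.isTrail] at hRsh
  rw [walkWeight_eq_edgeSetWeight _ hQ.isTrail] at hQsh
  rw [walkWeight_eq_edgeSetWeight _ hP] at hPsh
  omega

end Finite

theorem stmt_2_general [Fintype V] (G : SimpleGraph V) (T : Set V) (F : Set (Sym2 V)) (r r' : V)
    (hF : IsMinJoin G T F)
    (hprimal : ∀ x : V, distF G F r x ≤ 0)
    (hr' : distF G F r r' = 0) (hne : r' ≠ r)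
    (P : G.Walk r r') (hP : P.IsPath) (hPsh : walkWeight F P = distF G F r r') :
    IsMinJoin G (symmDiff T {r, r'}) (symmDiff F {e | e ∈ P.edges}) ∧
    (∀ x : V, distF G (symmDiff F {e | e ∈ P.edges}) r' x = distF G F r x) ∧
    (∀ x : V, distF G (symmDiff F {e | e ∈ P.edges}) r' x ≤ 0) ∧
    {x : V | distF G (symmDiff F {e | e ∈ P.edges}) r' x = 0} = {x : V | distF G F r x = 0} ∧
    {x : V | distF G (symmDiff F {e | e ∈ P.edges}) r' x < 0} = {x : V | distF G F r x < 0} := by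
  have hdist (x : V) : distF G (symmDiff F {e | e ∈ P.edges}) r' x = distF G F r x := by
    by_cases hx : G.Reachable r x
    · have h := hF.distF_symmDiff_edgeSet hP.isTrail hPsh hx
      rwa [hr', sub_zero] at h
    · rw [distF_of_not_reachable _ hx,
        distF_of_not_reachable _ fun h => hx (P.reachable.trans h)]
  refine ⟨?_, hdist, fun x => (hdist x).trans_le (hprimal x), ?_, ?_⟩
  · have h := hF.symmDiff_edgeSet hP.isTrail hPsh
    rwa [Set.singleton_symmDiff_singleton hne.symm] at h
  all_goals simp only [hdist]

/-- For an `r`-primal graft `(G, T)` with minimum join `F` and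
`r' ∈ A(r) ∖ {r}`, if `P` is an `F`-shortest path between `r` and `r'`, then
`F Δ E(P)` is a minimum join of `(G, T Δ {r, r'})`, the distances from `r'` with respect to
`F Δ E(P)` agree with the distances from `r` with respect to `F`, and consequently
`(G, T Δ {r, r'})` is `r'`-primal with the same sets `A` and `D`. -/
theorem stmt_2 [Fintype V] (G : SimpleGraph V) (T : Set V) (F : Set (Sym2 V)) (r r' : V)
    (hGT : IsGraft G T) (hF : IsMinJoin G T F)
    (hprimal : ∀ x : V, distF G F r x ≤ 0)
    (hr' : distF G F r r' = 0) (hne : r' ≠ r)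
    (P : G.Walk r r') (hP : P.IsPath) (hPsh : walkWeight F P = distF G F r r') :
    IsMinJoin G (symmDiff T {r, r'}) (symmDiff F {e | e ∈ P.edges}) ∧
    (∀ x : V, distF G (symmDiff F {e | e ∈ P.edges}) r' x = distF G F r x) ∧
    (∀ x : V, distF G (symmDiff F {e | e ∈ P.edges}) r' x ≤ 0) ∧
    {x : V | distF G (symmDiff F {e | e ∈ P.edges}) r' x = 0} = {x : V | distF G F r x = 0} ∧
    {x : V | distF G (symmDiff F {e | e ∈ P.edges}) r' x < 0} = {x : V | distF G F r x < 0} :=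
  stmt_2_general G T F r r' hF hprimal hr' hne P hP hPsh
end
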